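/- arXiv:1312.7037 — 2 statements merged into one kernel-verified Lean document; each statement's English description precedes it below -/
import Mathlib

section
/- Let q_1, ..., q_l be distinct odd primes, e_1, ..., e_l positive integers, and r a nonnegative integer such that S_{q_i^{e_i} - 1} \equiv r \pmod{q_i^{e_i}} for all i = 1, ..., l. Then for n = q_1^{e_1} q_2^{e_2} \cdots q_l^{e_l} one has S_{n-1} \equiv r \pmod{n}. -/
/-!
Modulo `N`, the recurrence `D (m + 1) = (m + 1) * D m - (-1) ^ m` only sees `m mod N`. So if
`N ∣ m`, then `D m ≡ (-1) ^ m` and `j ↦ D (m + j)` obeys the same recurrence as `(-1) ^ m * D j`,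
i.e. `D` is periodic up to sign with period `N`. For odd `n` with `N ∣ n` this gives
`D (n - 1) ≡ D (N - 1) [ZMOD N]`, and the Chinese remainder theorem over the pairwise coprime
`q i ^ e i` glues the congruences together.
-/

open Function

theorem numDerangements_modEq_neg_one_pow_of_dvd {N m : ℕ} (h : N ∣ m) :
    (numDerangements m : ℤ) ≡ (-1) ^ m [ZMOD N] := by
  cases m with
  | zero => rfl
  | succ m =>
    have hm : ((m + 1 : ℕ) : ℤ) ≡ 0 [ZMOD N] :=
      Int.modEq_zero_iff_dvd.2 (Int.natCast_dvd_natCast.2 h)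
    rw [numDerangements_succ, pow_succ]
    calc ((m : ℤ) + 1) * numDerangements m - (-1) ^ m
        ≡ 0 * numDerangements m - (-1) ^ m [ZMOD N] := by push_cast at hm; gcongr
      _ = (-1) ^ m * -1 := by ring

theorem numDerangements_add_modEq {N m : ℕ} (h : N ∣ m) (j : ℕ) :
    (numDerangements (m + j) : ℤ) ≡ (-1) ^ m * numDerangements j [ZMOD N] := by
  induction j with
  | zero => simpa using numDerangements_modEq_neg_one_pow_of_dvd h
  | succ j ih =>
    have hm : (m : ℤ) ≡ 0 [ZMOD N] := Int.modEq_zero_iff_dvd.2 (Int.natCast_dvd_natCast.2 h)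
    rw [← add_assoc, numDerangements_succ, numDerangements_succ]
    calc ((m + j : ℕ) + 1 : ℤ) * numDerangements (m + j) - (-1) ^ (m + j)
        ≡ (0 + j + 1) * ((-1) ^ m * numDerangements j) - (-1) ^ (m + j) [ZMOD N] := by
          push_cast; gcongr
      _ = (-1) ^ m * ((j + 1) * numDerangements j - (-1) ^ j) := by ring

theorem numDerangements_pred_modEq_of_dvd {N n : ℕ} (hn : Odd n) (h : N ∣ n) :
    (numDerangements (n - 1) : ℤ) ≡ numDerangements (N - 1) [ZMOD N] := by
  have hN : Odd N := hn.of_dvd_nat h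
  have hle : N ≤ n := Nat.le_of_dvd hn.pos h
  have heven : Even (n - N) := Nat.Odd.sub_odd hn hN
  have hsplit : n - 1 = (n - N) + (N - 1) := by have := hN.pos; omega
  rw [hsplit]
  simpa [heven.neg_one_pow] using numDerangements_add_modEq (Nat.dvd_sub h dvd_rfl) (N - 1)

theorem Int.modEq_prod_of_pairwise_coprime {ι : Type*} [Fintype ι] {m : ι → ℤ}
    (hm : Pairwise (IsCoprime on m)) {a b : ℤ} (h : ∀ i, a ≡ b [ZMOD m i]) :
    a ≡ b [ZMOD ∏ i, m i] :=
  Int.modEq_iff_dvd.2 (Fintype.prod_dvd_of_coprime hm fun i ↦ Int.modEq_iff_dvd.1 (h i))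

theorem derangement_crt_odd_prime_powers_general (l : ℕ) (q e : Fin l → ℕ) (r : ℕ)
    (hq : ∀ i, (q i).Prime) (hodd : ∀ i, Odd (q i)) (hinj : Function.Injective q)
    (hcong : ∀ i, (numDerangements (q i ^ e i - 1) : ℤ) ≡ (r : ℤ) [ZMOD ((q i ^ e i : ℕ) : ℤ)]) :
    (numDerangements ((∏ i, q i ^ e i) - 1) : ℤ) ≡ (r : ℤ)
      [ZMOD ((∏ i, q i ^ e i : ℕ) : ℤ)] := by
  have hn : Odd (∏ i, q i ^ e i) := Finset.prod_induction _ Odd (fun _ _ ↦ Odd.mul) odd_one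
    fun i _ ↦ (hodd i).pow
  have hcoprime : Pairwise (IsCoprime on fun i ↦ ((q i ^ e i : ℕ) : ℤ)) := fun i j hij ↦
    Nat.isCoprime_iff_coprime.2 (Nat.coprime_pow_primes _ _ (hq i) (hq j) (hinj.ne hij))
  rw [Nat.cast_prod]
  exact Int.modEq_prod_of_pairwise_coprime hcoprime fun i ↦
    (numDerangements_pred_modEq_of_dvd hn (Finset.dvd_prod_of_mem _ (Finset.mem_univ i))).trans
      (hcong i)

/-- If `q₁, …, q_l` are distinct odd primes, `e_i ≥ 1`, and `r ≥ 0` satisfies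
`S_{q_i^{e_i}-1} ≡ r (mod q_i^{e_i})` for all `i`, then for
`n = ∏ q_i^{e_i}` we have `S_{n-1} ≡ r (mod n)`. -/
theorem derangement_crt_odd_prime_powers (l : ℕ) (q e : Fin l → ℕ) (r : ℕ)
    (hq : ∀ i, (q i).Prime) (hodd : ∀ i, Odd (q i)) (hinj : Function.Injective q)
    (he : ∀ i, 0 < e i)
    (hcong : ∀ i, (numDerangements (q i ^ e i - 1) : ℤ) ≡ (r : ℤ) [ZMOD ((q i ^ e i : ℕ) : ℤ)]) :
    (numDerangements ((∏ i, q i ^ e i) - 1) : ℤ) ≡ (r : ℤ)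
      [ZMOD ((∏ i, q i ^ e i : ℕ) : ℤ)] :=
  derangement_crt_odd_prime_powers_general l q e r hq hodd hinj hcong
end

section
/- For every positive integer m and every prime p not dividing m, \sum_{k=1}^{p-1} B_k \cdot (-m)^{-k} \equiv (-1)^{m-1} S_{m-1} \pmod{p}, where the inverse of (-m) is taken modulo p. -/
/-!
Over `ZMod p` take the weight `w` with `w (-(n + 1)) = -(-1)ⁿ Dₙ`. The derangement recurrence
`D_{n+1} = (n + 1) Dₙ - (-1)ⁿ` becomes the functional equation `w (x - 1) = x w(x) - 1`, and
`∑ₓ w(x) = 1` follows from `(-1)ⁿ Dₙ = ∑ₛ (-1)ˢ n(n-1)⋯(n-s+1)`, the hockey-stick identity and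
Wilson's theorem. Because `∑ₓ xᵏ = 0` for `k < p - 1`, the functional equation makes the moments
`∑ₓ w(x) xᵏ` obey the Bell recurrence, so `Bₖ ≡ ∑ₓ w(x) xᵏ` for `k < p`: a truncated Dobinski
formula. Then `∑_{k=1}^{p-1} Bₖ tᵏ = ∑ₓ w(x) ∑_{k=1}^{p-1} (x t)ᵏ`, and the inner geometric sum
is `-1` at `x = t⁻¹` and `0` elsewhere, leaving `-w(t⁻¹)`; at `t = (-m)⁻¹` this is
`(-1)^(m-1) D_{m-1}`.
-/

/-- The Bell numbers: `B₀ = 1` and `B_{n+1} = ∑_{k=0}^{n} C(n,k)·B_k`. -/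
def bell : ℕ → ℕ
  | 0 => 1
  | n + 1 => ∑ k ∈ (Finset.range (n + 1)).attach,
      n.choose k.val * bell k.val
decreasing_by exact Finset.mem_range.mp k.2

open Finset
open scoped Nat

theorem bell_succ (n : ℕ) :
    bell (n + 1) = ∑ k ∈ range (n + 1), n.choose k * bell k := by
  rw [bell, sum_attach (range (n + 1)) fun k => n.choose k * bell k]

theorem Nat.sum_range_choose_eq_choose_succ (N s : ℕ) :
    ∑ n ∈ range N, n.choose s = N.choose (s + 1) := by
  induction N with
  | zero => simp
  | succ N ih => rw [sum_range_succ, ih, Nat.choose_succ_succ', add_comm]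

section Derangements

variable {R : Type*} [CommRing R]

theorem neg_one_pow_mul_numDerangements_succ (n : ℕ) :
    (-1 : R) ^ (n + 1) * numDerangements (n + 1) =
      1 - (n + 1) * ((-1) ^ n * numDerangements n) := by
  have h := congrArg (Int.cast : ℤ → R) (numDerangements_succ n)
  push_cast at h
  have hsq : ((-1 : R) ^ n) ^ 2 = 1 := by rw [← pow_mul, pow_mul', neg_one_sq, one_pow]
  rw [h]
  linear_combination hsq

theorem neg_one_pow_mul_numDerangements_eq_sum (n : ℕ) :
    (-1 : R) ^ n * numDerangements n = ∑ s ∈ range (n + 1), (-1) ^ s * (n.descFactorial s : R) := by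
  induction n with
  | zero => simp
  | succ n ih =>
    rw [sum_range_succ', neg_one_pow_mul_numDerangements_succ, ih, mul_sum, sub_eq_add_neg,
      ← sum_neg_distrib, add_comm]
    simp only [Nat.succ_descFactorial_succ, Nat.descFactorial_zero, Nat.cast_mul, Nat.cast_succ]
    congr 1
    · exact sum_congr rfl fun s _ => by ring
    · simp

theorem neg_one_pow_mul_numDerangements_eq_neg_apply {w : R → R}
    (hw : ∀ x, w (x - 1) = x * w x - 1) (n : ℕ) :
    (-1 : R) ^ n * numDerangements n = -w (-(n + 1)) := by
  induction n with
  | zero => simpa using (congrArg Neg.neg (hw 0)).symm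
  | succ n ih =>
    have h : -((n + 1 : ℕ) + 1 : R) = -(n + 1) - 1 := by push_cast; ring
    rw [neg_one_pow_mul_numDerangements_succ, ih, h, hw]
    ring

end Derangements

theorem sum_range_neg_one_pow_mul_numDerangements (p : ℕ) [Fact p.Prime] :
    ∑ n ∈ range p, (-1 : ZMod p) ^ n * numDerangements n = -1 := by
  have hp := (Fact.out : p.Prime)
  have hextend : ∀ n ∈ range p, (-1 : ZMod p) ^ n * numDerangements n =
      ∑ s ∈ range p, (-1) ^ s * (n.descFactorial s : ZMod p) := by
    intro n hn
    rw [neg_one_pow_mul_numDerangements_eq_sum]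
    refine sum_subset (range_subset_range.2 (mem_range.1 hn)) fun s _ hs => ?_
    rw [Nat.descFactorial_eq_zero_iff_lt.2 (by simpa using hs), Nat.cast_zero, mul_zero]
  have hhockey : ∀ s, ∑ n ∈ range p, (n.descFactorial s : ZMod p) =
      s ! * (p.choose (s + 1) : ZMod p) := by
    intro s
    simp only [Nat.descFactorial_eq_factorial_mul_choose, Nat.cast_mul, ← mul_sum]
    rw [← Nat.cast_sum, Nat.sum_range_choose_eq_choose_succ]
  rw [sum_congr rfl hextend, sum_comm]
  simp only [← mul_sum, hhockey]
  rw [sum_eq_single_of_mem (p - 1) (by simp [hp.pos])]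
  · rw [Nat.sub_add_cancel hp.one_le, Nat.choose_self, ZMod.wilsons_lemma,
      ZMod.pow_card_sub_one_eq_one (neg_ne_zero.2 one_ne_zero)]
    simp
  · intro s hs hne
    have hdvd : p ∣ p.choose (s + 1) := hp.dvd_choose_self (by omega) (by simp at hs; omega)
    rw [(ZMod.natCast_eq_zero_iff _ _).2 hdvd]
    simp

section FiniteField

variable {K : Type*} [Field K] [Fintype K]

theorem sum_Icc_one_pow_eq_ite [DecidableEq K] (y : K) :
    ∑ k ∈ Icc 1 (Fintype.card K - 1), y ^ k = if y = 1 then -1 else 0 := by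
  have hq : 1 ≤ Fintype.card K := Fintype.card_pos
  rw [← Ico_add_one_right_eq_Icc, Nat.sub_add_cancel hq]
  split_ifs with hy
  · simp [hy, Nat.cast_sub hq]
  · have h := geom_sum_Ico_mul y hq
    rw [FiniteField.pow_card, pow_one, sub_self] at h
    exact (mul_eq_zero.1 h).resolve_right (sub_ne_zero.2 hy)

theorem sum_mul_add_one_pow {w : K → K} (hw : ∀ x, w (x - 1) = x * w x - 1) {n : ℕ}
    (hn : n < Fintype.card K - 1) :
    ∑ x, w x * (x + 1) ^ n = ∑ x, w x * x ^ (n + 1) := by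
  calc ∑ x, w x * (x + 1) ^ n = ∑ y, w (y - 1) * y ^ n :=
        Fintype.sum_equiv (Equiv.addRight 1) _ _ fun x => by simp
    _ = ∑ y, w y * y ^ (n + 1) - ∑ y : K, y ^ n := by
        simp only [hw, sub_mul, sum_sub_distrib, one_mul, pow_succ]
        congr 1
        exact sum_congr rfl fun y _ => by ring
    _ = ∑ y, w y * y ^ (n + 1) := by rw [FiniteField.sum_pow_lt_card_sub_one K n hn, sub_zero]

theorem bell_eq_sum_mul_pow {w : K → K} (hw : ∀ x, w (x - 1) = x * w x - 1)
    (hw_sum : ∑ x, w x = 1) {k : ℕ} (hk : k < Fintype.card K) :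
    (bell k : K) = ∑ x, w x * x ^ k := by
  induction k using Nat.strong_induction_on with
  | _ k ih =>
    cases k with
    | zero => simp [bell, hw_sum]
    | succ n =>
      rw [← sum_mul_add_one_pow hw (by omega), bell_succ]
      push_cast
      calc ∑ j ∈ range (n + 1), (n.choose j : K) * bell j
          = ∑ j ∈ range (n + 1), ∑ x, w x * (x ^ j * 1 ^ (n - j) * n.choose j) := by
            refine sum_congr rfl fun j hj => ?_
            have hj' := mem_range.1 hj
            rw [ih j hj' (by omega), mul_sum]
            exact sum_congr rfl fun x _ => by ring
        _ = ∑ x, w x * (x + 1) ^ n := by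
            rw [sum_comm]
            simp only [← mul_sum, ← add_pow]

theorem sum_Icc_bell_mul_pow {w : K → K} (hw : ∀ x, w (x - 1) = x * w x - 1)
    (hw_sum : ∑ x, w x = 1) {t : K} (ht : t ≠ 0) :
    ∑ k ∈ Icc 1 (Fintype.card K - 1), (bell k : K) * t ^ k = -w t⁻¹ := by
  classical
  calc ∑ k ∈ Icc 1 (Fintype.card K - 1), (bell k : K) * t ^ k
      = ∑ x, w x * ∑ k ∈ Icc 1 (Fintype.card K - 1), (x * t) ^ k := by
        simp only [mul_sum]
        rw [sum_comm]
        refine sum_congr rfl fun k hk => ?_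
        rw [bell_eq_sum_mul_pow hw hw_sum (by simp at hk; omega), sum_mul]
        exact sum_congr rfl fun x _ => by ring
    _ = ∑ x, if x = t⁻¹ then -w x else 0 := by
        refine sum_congr rfl fun x _ => ?_
        rw [sum_Icc_one_pow_eq_ite, mul_eq_one_iff_eq_inv₀ ht]
        split_ifs <;> simp
    _ = -w t⁻¹ := by simp

end FiniteField

section ZMod

variable (p : ℕ) [Fact p.Prime]

/-- At `x = i` this is congruent to the truncated Dobinski weight
`(1 / i!) ∑_{s ≤ p - 1 - i} (-1)ˢ / s!`, a stand-in for `e⁻¹ / i!`. -/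
noncomputable def dobinskiWeight (x : ZMod p) : ZMod p :=
  -((-1) ^ (-(x + 1)).val * numDerangements (-(x + 1)).val)

variable {p}

theorem dobinskiWeight_sub_one (x : ZMod p) :
    dobinskiWeight p (x - 1) = x * dobinskiWeight p x - 1 := by
  rcases eq_or_ne x 0 with rfl | hx
  · simp [dobinskiWeight]
  set n := (-(x + 1)).val
  have hcast : ((n + 1 : ℕ) : ZMod p) = -x := by
    push_cast [n, ZMod.natCast_zmod_val]
    ring
  have hlt : n + 1 < p := by
    refine lt_of_le_of_ne (ZMod.val_lt _) fun h => hx ?_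
    rw [h, ZMod.natCast_self] at hcast
    exact neg_eq_zero.1 hcast.symm
  have hval : (-x).val = n + 1 := by rw [← hcast, ZMod.val_cast_of_lt hlt]
  simp only [dobinskiWeight, sub_add_cancel, hval, neg_one_pow_mul_numDerangements_succ]
  push_cast at hcast
  rw [hcast]
  ring

theorem sum_dobinskiWeight : ∑ x, dobinskiWeight p x = 1 := by
  have hreindex : ∑ x, dobinskiWeight p x =
      -∑ x : ZMod p, (-1 : ZMod p) ^ x.val * (numDerangements x.val : ZMod p) := by
    rw [← sum_neg_distrib]
    exact Fintype.sum_equiv ((Equiv.addRight 1).trans (Equiv.neg _)) _ _ fun x => rfl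
  have hrange : ∑ x : ZMod p, (-1 : ZMod p) ^ x.val * (numDerangements x.val : ZMod p) =
      ∑ n ∈ range p, (-1 : ZMod p) ^ n * (numDerangements n : ZMod p) := by
    obtain ⟨q, rfl⟩ : ∃ q, p = q + 1 := Nat.exists_eq_succ_of_ne_zero (NeZero.ne p)
    exact Fin.sum_univ_eq_sum_range (fun n => (-1 : ZMod (q + 1)) ^ n * (numDerangements n : _)) _
  rw [hreindex, hrange, sum_range_neg_one_pow_mul_numDerangements, neg_neg]

end ZMod

theorem sun_zagier_general (m p : ℕ) (hp : p.Prime) (hpm : ¬ p ∣ m) :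
    ∑ k ∈ Finset.Icc 1 (p - 1), (bell k : ZMod p) * (-(m : ZMod p))⁻¹ ^ k =
      (-1 : ZMod p) ^ (m - 1) * (numDerangements (m - 1) : ZMod p) := by
  have := Fact.mk hp
  have hm : (m : ZMod p) ≠ 0 := by rwa [Ne, ZMod.natCast_eq_zero_iff]
  obtain ⟨n, rfl⟩ : ∃ n, m = n + 1 := Nat.exists_eq_succ_of_ne_zero (by rintro rfl; simp at hm)
  have h := sum_Icc_bell_mul_pow dobinskiWeight_sub_one sum_dobinskiWeight
    (inv_ne_zero (neg_ne_zero.2 hm))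
  rw [ZMod.card, inv_inv] at h
  rw [h, Nat.add_sub_cancel, neg_one_pow_mul_numDerangements_eq_neg_apply dobinskiWeight_sub_one,
    Nat.cast_succ]

/-- Sun–Zagier: for every positive integer `m` and every prime `p ∤ m`,
`∑_{k=1}^{p-1} B_k·(-m)^{-k} ≡ (-1)^{m-1}·S_{m-1} (mod p)`. -/
theorem sun_zagier (m p : ℕ) (hm : 0 < m) (hp : p.Prime) (hpm : ¬ p ∣ m) :
    ∑ k ∈ Finset.Icc 1 (p - 1), (bell k : ZMod p) * (-(m : ZMod p))⁻¹ ^ k =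
      (-1 : ZMod p) ^ (m - 1) * (numDerangements (m - 1) : ZMod p) :=
  sun_zagier_general m p hp hpm
end
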